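/- Let n ≥ 1 be a natural number, p ∈ [0,1], δ ∈ (0,1), and let X be a random variable with the binomial distribution Bin(n,p). For each x with 0 ≤ x < n, let q(x) be the unique solution in (0,1) of the equation (n−x)·C(n,x)·∫_{q(x)}^{1} t^x (1−t)^{n−1−x} dt = δ, and set q(n) = 1. Then Pr(p ≤ q(X)) ≥ 1 − δ; that is, the (1−δ)-quantile of the Beta(X+1, n−X) distribution is a valid (1−δ)-level upper confidence bound for the binomial success probability p. -/

import Mathlib

open scoped Classical BigOperators

/-- The probability mass function of the binomial distribution `Bin(n, p)` at `j`. -/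
noncomputable def binomPMF (n : ℕ) (p : ℝ) (j : ℕ) : ℝ :=
  (n.choose j : ℝ) * p ^ j * (1 - p) ^ (n - j)

/-- The cumulative distribution function of `Bin(n, p)` at `k`:
`F_{n,p}(k) = Σ_{j=0}^{min(k,n)} C(n,j) p^j (1-p)^{n-j}`. -/
noncomputable def binomCDF (n : ℕ) (p : ℝ) (k : ℕ) : ℝ :=
  ∑ j ∈ Finset.range (min k n + 1), binomPMF n p j

/-- One-sided Clopper–Pearson upper confidence bound at count `k` and level `δ`:
`sup {R ∈ [0,1] : F_{n,R}(k) ≥ δ}`. -/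
noncomputable def cpUpper (n : ℕ) (δ : ℝ) (k : ℕ) : ℝ :=
  sSup {R : ℝ | R ∈ Set.Icc (0 : ℝ) 1 ∧ δ ≤ binomCDF n R k}

/-- One-sided Clopper–Pearson lower confidence bound at count `k` and level `δ`:
`inf {R ∈ [0,1] : 1 - F_{n,R}(k-1) ≥ δ}` for `k ≥ 1`, and `0` for `k = 0`. -/
noncomputable def cpLower (n : ℕ) (δ : ℝ) : ℕ → ℝ
  | 0 => 0
  | k + 1 => sInf {R : ℝ | R ∈ Set.Icc (0 : ℝ) 1 ∧ δ ≤ 1 - binomCDF n R k}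

/-! The Bernstein polynomials `B_{n,ν}` satisfy `B_{n,ν}' = n (B_{n-1,ν-1} - B_{n-1,ν})`, so the
derivative of `r ↦ F_{n,r}(x) = Σ_{ν ≤ x} B_{n,ν}(r)` telescopes to `-n B_{n-1,x}(r)`. Integrating
from `r` to `1`, where `F_{n,1}(x) = 0` for `x < n`, turns the defining equation of `q(x)` into
`F_{n,q(x)}(x) = δ`, and shows that `F_{n,r}(x)` is antitone in `r`. If `K` is the largest index
with `q(K) < p`, then `K < n` and the miscoverage probability is at most
`F_{n,p}(K) ≤ F_{n,q(K)}(K) = δ`. -/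

open Finset Polynomial

theorem binomPMF_eq_eval_bernsteinPolynomial (n j : ℕ) (p : ℝ) :
    binomPMF n p j = (bernsteinPolynomial ℝ n j).eval p := by
  simp [binomPMF, bernsteinPolynomial]

theorem binomPMF_nonneg (n j : ℕ) {p : ℝ} (hp : p ∈ Set.Icc (0 : ℝ) 1) :
    0 ≤ binomPMF n p j := by
  have hp₀ : 0 ≤ p := hp.1
  have hp₁ : 0 ≤ 1 - p := sub_nonneg.2 hp.2
  unfold binomPMF
  positivity

theorem sum_range_binomPMF (n : ℕ) (p : ℝ) : ∑ j ∈ range (n + 1), binomPMF n p j = 1 := by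
  simp_rw [binomPMF_eq_eval_bernsteinPolynomial, ← eval_finsetSum, bernsteinPolynomial.sum,
    eval_one]

theorem derivative_sum_range_bernsteinPolynomial {R : Type*} [CommRing R] (n x : ℕ) :
    derivative (∑ ν ∈ range (x + 1), bernsteinPolynomial R n ν) =
      -(n * bernsteinPolynomial R (n - 1) x) := by
  induction x with
  | zero => simp [bernsteinPolynomial.derivative_zero]
  | succ x ih =>
    rw [sum_range_succ, derivative_add, ih, bernsteinPolynomial.derivative_succ]
    ring

theorem binomCDF_eq_eval_sum_bernsteinPolynomial {n x : ℕ} (hx : x ≤ n) (r : ℝ) :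
    binomCDF n r x = (∑ ν ∈ range (x + 1), bernsteinPolynomial ℝ n ν).eval r := by
  simp [binomCDF, min_eq_left hx, eval_finsetSum, binomPMF_eq_eval_bernsteinPolynomial]

theorem sum_binomPMF_le_binomCDF {n x : ℕ} (hx : x ≤ n) {p : ℝ} (hp : p ∈ Set.Icc (0 : ℝ) 1)
    {s : Finset ℕ} (hs : ∀ j ∈ s, j ≤ x) : ∑ j ∈ s, binomPMF n p j ≤ binomCDF n p x := by
  rw [binomCDF, min_eq_left hx]
  exact sum_le_sum_of_subset_of_nonneg (fun j hj ↦ mem_range.2 (Nat.lt_succ_of_le (hs j hj)))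
    fun j _ _ ↦ binomPMF_nonneg n j hp

theorem hasDerivAt_binomCDF {n x : ℕ} (hx : x ≤ n) (r : ℝ) :
    HasDerivAt (fun r ↦ binomCDF n r x) (-(n * binomPMF (n - 1) r x)) r := by
  simp_rw [binomCDF_eq_eval_sum_bernsteinPolynomial hx]
  refine (Polynomial.hasDerivAt _ r).congr_deriv ?_
  rw [derivative_sum_range_bernsteinPolynomial]
  simp [binomPMF_eq_eval_bernsteinPolynomial]

theorem binomCDF_one {n x : ℕ} (hx : x < n) : binomCDF n 1 x = 0 := by
  rw [binomCDF_eq_eval_sum_bernsteinPolynomial hx.le, eval_finsetSum]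
  refine sum_eq_zero fun j hj ↦ ?_
  rw [bernsteinPolynomial.eval_at_1, if_neg]
  have := mem_range.1 hj
  omega

theorem binomCDF_antitoneOn {n x : ℕ} (hx : x ≤ n) :
    AntitoneOn (fun r ↦ binomCDF n r x) (Set.Icc 0 1) := by
  have hderiv := hasDerivAt_binomCDF hx
  refine antitoneOn_of_deriv_nonpos (convex_Icc 0 1)
    (fun r _ ↦ (hderiv r).continuousAt.continuousWithinAt)
    (fun r _ ↦ (hderiv r).differentiableAt.differentiableWithinAt) fun r hr ↦ ?_
  rw [interior_Icc] at hr
  rw [(hderiv r).deriv, neg_nonpos]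
  exact mul_nonneg n.cast_nonneg (binomPMF_nonneg _ _ (Set.Ioo_subset_Icc_self hr))

theorem natCast_mul_binomPMF_pred {n x : ℕ} (hx : x < n) (t : ℝ) :
    n * binomPMF (n - 1) t x =
      ((n : ℝ) - x) * n.choose x * (t ^ x * (1 - t) ^ (n - 1 - x)) := by
  obtain ⟨m, rfl⟩ : ∃ m, n = m + 1 := ⟨n - 1, by omega⟩
  have hchoose : (m.choose x : ℝ) * (m + 1) = (m + 1).choose x * ((m + 1 : ℕ) - x : ℝ) := by
    rw [← Nat.cast_sub hx.le]
    exact_mod_cast Nat.choose_mul_succ_eq m x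
  simp only [binomPMF, Nat.add_sub_cancel]
  push_cast at hchoose ⊢
  linear_combination (t ^ x * (1 - t) ^ (m - x)) * hchoose

theorem binomCDF_eq_integral {n x : ℕ} (hx : x < n) (r : ℝ) :
    binomCDF n r x =
      ((n : ℝ) - x) * n.choose x * ∫ t in r..1, t ^ x * (1 - t) ^ (n - 1 - x) := by
  have hftc := intervalIntegral.integral_eq_sub_of_hasDerivAt
    (fun t _ ↦ hasDerivAt_binomCDF hx.le t) (a := r) (b := 1)
    (Continuous.intervalIntegrable (by unfold binomPMF; fun_prop) _ _)
  simp_rw [intervalIntegral.integral_neg, natCast_mul_binomPMF_pred hx,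
    intervalIntegral.integral_const_mul, binomCDF_one hx] at hftc
  linarith

theorem betaQuantile_upper_coverage_general
    (n : ℕ) (p : ℝ) (hp : p ∈ Set.Icc (0 : ℝ) 1)
    (δ : ℝ) (hδ : δ ∈ Set.Ioo (0 : ℝ) 1) (q : ℕ → ℝ)
    (hq : ∀ x, x < n → q x ∈ Set.Ioo (0 : ℝ) 1 ∧
      ((n : ℝ) - x) * (n.choose x : ℝ) *
        (∫ t in (q x)..1, t ^ x * (1 - t) ^ (n - 1 - x)) = δ)
    (hqn : q n = 1) :
    1 - δ ≤ ∑ j ∈ Finset.range (n + 1),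
      (if p ≤ q j then binomPMF n p j else 0) := by
  set S := (range (n + 1)).filter fun j ↦ ¬p ≤ q j
  have hsplit : ∑ j ∈ range (n + 1) with p ≤ q j, binomPMF n p j + ∑ j ∈ S, binomPMF n p j = 1 :=
    by rw [sum_filter_add_sum_filter_not, sum_range_binomPMF]
  rw [← sum_filter]
  suffices ∑ j ∈ S, binomPMF n p j ≤ δ by linarith
  rcases S.eq_empty_or_nonempty with hS | hS
  · simpa [hS] using hδ.1.le
  obtain ⟨hKn, hqK⟩ := mem_filter.1 (S.max'_mem hS)
  set K := S.max' hS
  have hK : K < n := by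
    refine lt_of_le_of_ne (Nat.lt_succ_iff.1 (mem_range.1 hKn)) fun hKeq ↦ hqK ?_
    rw [hKeq, hqn]
    exact hp.2
  obtain ⟨hqK_mem, hqK_eq⟩ := hq K hK
  calc ∑ j ∈ S, binomPMF n p j
      ≤ binomCDF n p K := sum_binomPMF_le_binomCDF hK.le hp fun j hj ↦ S.le_max' j hj
    _ ≤ binomCDF n (q K) K :=
        binomCDF_antitoneOn hK.le (Set.Ioo_subset_Icc_self hqK_mem) hp (not_le.1 hqK).le
    _ = δ := by rw [binomCDF_eq_integral hK, hqK_eq]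

/-- The (1-δ)-quantile of the Beta(X+1, n-X) distribution, characterized as the unique
solution q(x) ∈ (0,1) of (n-x)·C(n,x)·∫_{q(x)}^1 t^x (1-t)^{n-1-x} dt = δ for x < n
(with q(n) = 1), is a valid (1-δ)-level upper confidence bound: Pr(p ≤ q(X)) ≥ 1 - δ. -/
theorem betaQuantile_upper_coverage
    (n : ℕ) (hn : 1 ≤ n) (p : ℝ) (hp : p ∈ Set.Icc (0 : ℝ) 1)
    (δ : ℝ) (hδ : δ ∈ Set.Ioo (0 : ℝ) 1) (q : ℕ → ℝ)
    (hq : ∀ x, x < n → q x ∈ Set.Ioo (0 : ℝ) 1 ∧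
      ((n : ℝ) - x) * (n.choose x : ℝ) *
        (∫ t in (q x)..1, t ^ x * (1 - t) ^ (n - 1 - x)) = δ)
    (hqn : q n = 1) :
    1 - δ ≤ ∑ j ∈ Finset.range (n + 1),
      (if p ≤ q j then binomPMF n p j else 0) :=
  betaQuantile_upper_coverage_general n p hp δ hδ q hq hqn
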